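/- arXiv:1706.06159 — 7 statements merged into one kernel-verified Lean document; each statement's English description precedes it below -/
import Mathlib

section
/- Suppose inner-product invariance holds for (X^e, Y^e), e ∈ E, under β^0 ∈ R^p, i.e., E[X^e_k (Y^e − X^e β^0)] is the same for all environments e and each coordinate k. Let ζ^e_1, …, ζ^e_p, ζ^e_y be centered random variables, jointly independent and independent of (X^e, Y^e), with finite variance, such that E[(ζ^e_k)^2] = E[(ζ^f_k)^2] for all e, f ∈ E and k = 1,…,p. Define the observed variables X̃^e_k = X^e_k + ζ^e_k and Ỹ^e = Y^e + ζ^e_y. Then inner-product invariance also holds for (X̃^e, Ỹ^e), e ∈ E, under the same β^0. -/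
open MeasureTheory ProbabilityTheory

/-- Index type for the joint-independence assumption of the errors-in-variables model:
`none` indexes the pair `(X, Y)` and `some i` indexes the measurement errors
`ζ_1, …, ζ_p` (for `i < p`) and `ζ_y` (for `i = p`). -/
def EIVType (p : ℕ) : Option (Fin (p + 1)) → Type
  | none => (Fin p → ℝ) × ℝ
  | some _ => ℝ

instance (p : ℕ) : ∀ i, MeasurableSpace (EIVType p i)
  | none => inferInstanceAs (MeasurableSpace ((Fin p → ℝ) × ℝ))
  | some _ => inferInstanceAs (MeasurableSpace ℝ)

def EIVFam {Ω : Type*} {p : ℕ} (X : Ω → Fin p → ℝ) (Y : Ω → ℝ)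
    (ζ : Ω → Fin p → ℝ) (ζy : Ω → ℝ) : ∀ i : Option (Fin (p + 1)), Ω → EIVType p i
  | none => fun ω => (X ω, Y ω)
  | some i => Fin.lastCases (fun ω => ζy ω) (fun k ω => ζ ω k) i

/-!
Write the observed residual as the latent residual `R = Y - X β⁰` plus the noise residual
`N = ζ_y - ζ β⁰`, and expand `E[(X_k + ζ_k) (R + N)]`. Independence and centering of the
errors kill `E[X_k N]` and `E[ζ_k R]`, and of `E[ζ_k N]` only `-β⁰_k E[ζ_k²]` survives. So the
observed moment is the latent one shifted by `-β⁰_k E[ζ_k²]`, which is the same in every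
environment.
-/

section SecondMoments

variable {Ω : Type*} [MeasurableSpace Ω] {μ : Measure Ω}

theorem integral_add_mul_add {a b c d : Ω → ℝ} (ha : MemLp a 2 μ) (hb : MemLp b 2 μ)
    (hc : MemLp c 2 μ) (hd : MemLp d 2 μ) :
    ∫ ω, (a ω + b ω) * (c ω + d ω) ∂μ
      = ∫ ω, a ω * c ω ∂μ + ∫ ω, a ω * d ω ∂μ + ∫ ω, b ω * c ω ∂μ + ∫ ω, b ω * d ω ∂μ := by
  have hmul {u v : Ω → ℝ} (hu : MemLp u 2 μ) (hv : MemLp v 2 μ) :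
      Integrable (fun ω => u ω * v ω) μ :=
    hu.integrable_mul hv
  simp only [add_mul, mul_add]
  rw [integral_add ((hmul ha hc).fun_add (hmul hb hc)) ((hmul ha hd).fun_add (hmul hb hd)),
    integral_add (hmul ha hc) (hmul hb hc), integral_add (hmul ha hd) (hmul hb hd)]
  ring

theorem integral_mul_sub_sum_mul {ι : Type*} [Fintype ι] {f g : Ω → ℝ} {h : ι → Ω → ℝ}
    (c : ι → ℝ) (hf : MemLp f 2 μ) (hg : MemLp g 2 μ) (hh : ∀ j, MemLp (h j) 2 μ) :
    ∫ ω, f ω * (g ω - ∑ j, h j ω * c j) ∂μ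
      = ∫ ω, f ω * g ω ∂μ - ∑ j, (∫ ω, f ω * h j ω ∂μ) * c j := by
  have hfh (j : ι) : Integrable (fun ω => f ω * h j ω * c j) μ :=
    (hf.integrable_mul (hh j)).mul_const (c j)
  have hfg : Integrable (fun ω => f ω * g ω) μ := hf.integrable_mul hg
  simp only [mul_sub, Finset.mul_sum, ← mul_assoc]
  rw [integral_sub hfg (integrable_finsetSum _ fun j _ => hfh j),
    integral_finsetSum _ fun j _ => hfh j]
  simp only [integral_mul_const]

end SecondMoments

section Independence

variable {Ω : Type*} [MeasurableSpace Ω] {μ : Measure Ω} {f g : Ω → ℝ}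

theorem ProbabilityTheory.IndepFun.integral_mul_eq_zero_of_left (h : f ⟂ᵢ[μ] g)
    (hf : AEStronglyMeasurable f μ) (hg : AEStronglyMeasurable g μ) (hf0 : ∫ ω, f ω ∂μ = 0) :
    ∫ ω, f ω * g ω ∂μ = 0 := by
  rw [h.integral_fun_mul_eq_mul_integral hf hg, hf0, zero_mul]

theorem ProbabilityTheory.IndepFun.integral_mul_eq_zero_of_right (h : f ⟂ᵢ[μ] g)
    (hf : AEStronglyMeasurable f μ) (hg : AEStronglyMeasurable g μ) (hg0 : ∫ ω, g ω ∂μ = 0) :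
    ∫ ω, f ω * g ω ∂μ = 0 := by
  rw [h.integral_fun_mul_eq_mul_integral hf hg, hg0, mul_zero]

end Independence

namespace EIVFam

variable {Ω : Type*} {p : ℕ} {X : Ω → Fin p → ℝ} {Y : Ω → ℝ} {ζ : Ω → Fin p → ℝ} {ζy : Ω → ℝ}

theorem some_castSucc (j : Fin p) : EIVFam X Y ζ ζy (some j.castSucc) = fun ω => ζ ω j :=
  Fin.lastCases_castSucc (motive := fun i => Ω → EIVType p (some i)) j

theorem some_last : EIVFam X Y ζ ζy (some (Fin.last p)) = ζy :=
  Fin.lastCases_last (motive := fun i => Ω → EIVType p (some i))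

variable [MeasurableSpace Ω] {μ : Measure Ω}

theorem indepFun_latent_noise (h : iIndepFun (EIVFam X Y ζ ζy) μ)
    {φ : (Fin p → ℝ) × ℝ → ℝ} (hφ : Measurable φ) (i : Fin (p + 1)) :
    (fun ω => φ (X ω, Y ω)) ⟂ᵢ[μ] EIVFam X Y ζ ζy (some i) :=
  (h.indepFun (Option.some_ne_none i).symm).comp hφ measurable_id

theorem indepFun_latent_noise_coord (h : iIndepFun (EIVFam X Y ζ ζy) μ)
    {φ : (Fin p → ℝ) × ℝ → ℝ} (hφ : Measurable φ) (j : Fin p) :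
    (fun ω => φ (X ω, Y ω)) ⟂ᵢ[μ] fun ω => ζ ω j := by
  have hj := indepFun_latent_noise h hφ j.castSucc
  rw [some_castSucc] at hj
  exact hj

theorem indepFun_latent_noiseY (h : iIndepFun (EIVFam X Y ζ ζy) μ)
    {φ : (Fin p → ℝ) × ℝ → ℝ} (hφ : Measurable φ) :
    (fun ω => φ (X ω, Y ω)) ⟂ᵢ[μ] ζy := by
  have hy := indepFun_latent_noise h hφ (Fin.last p)
  rw [some_last] at hy
  exact hy

theorem indepFun_noise_coord_noiseY (h : iIndepFun (EIVFam X Y ζ ζy) μ) (k : Fin p) :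
    (fun ω => ζ ω k) ⟂ᵢ[μ] ζy := by
  have hky := h.indepFun (i := some k.castSucc) (j := some (Fin.last p))
    (by simp [Fin.castSucc_ne_last])
  rw [some_castSucc, some_last] at hky
  exact hky

theorem indepFun_noise_coord (h : iIndepFun (EIVFam X Y ζ ζy) μ) {k j : Fin p} (hkj : k ≠ j) :
    (fun ω => ζ ω k) ⟂ᵢ[μ] fun ω => ζ ω j := by
  have hkj' := h.indepFun (i := some k.castSucc) (j := some j.castSucc) (by simpa using hkj)
  rw [some_castSucc, some_castSucc] at hkj'
  exact hkj'

end EIVFam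

section ErrorsInVariables

variable {Ω : Type*} [MeasurableSpace Ω] {μ : Measure Ω} {p : ℕ}
  {X : Ω → Fin p → ℝ} {Y : Ω → ℝ} {ζ : Ω → Fin p → ℝ} {ζy : Ω → ℝ}

theorem integral_observed_moment_eq (β0 : Fin p → ℝ)
    (hζcent : ∀ k, ∫ ω, ζ ω k ∂μ = 0) (hζycent : ∫ ω, ζy ω ∂μ = 0)
    (hindep : iIndepFun (EIVFam X Y ζ ζy) μ)
    (hL2X : ∀ k, MemLp (fun ω => X ω k) 2 μ) (hL2Y : MemLp Y 2 μ)
    (hL2ζ : ∀ k, MemLp (fun ω => ζ ω k) 2 μ) (hL2ζy : MemLp ζy 2 μ) (k : Fin p) :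
    ∫ ω, (X ω k + ζ ω k) * ((Y ω + ζy ω) - ∑ j, (X ω j + ζ ω j) * β0 j) ∂μ
      = ∫ ω, X ω k * (Y ω - ∑ j, X ω j * β0 j) ∂μ - β0 k * ∫ ω, (ζ ω k) ^ 2 ∂μ := by
  have hsum {q : Fin p → Ω → ℝ} (hq : ∀ j, MemLp (q j) 2 μ) :
      MemLp (fun ω => ∑ j, q j ω * β0 j) 2 μ :=
    memLp_finsetSum _ fun j _ => (hq j).mul_const (β0 j)
  have hR : MemLp (fun ω => Y ω - ∑ j, X ω j * β0 j) 2 μ := hL2Y.sub (hsum hL2X)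
  have hN : MemLp (fun ω => ζy ω - ∑ j, ζ ω j * β0 j) 2 μ := hL2ζy.sub (hsum hL2ζ)
  have hsplit : ∀ ω, (X ω k + ζ ω k) * ((Y ω + ζy ω) - ∑ j, (X ω j + ζ ω j) * β0 j)
      = (X ω k + ζ ω k) * ((Y ω - ∑ j, X ω j * β0 j) + (ζy ω - ∑ j, ζ ω j * β0 j)) := by
    intro ω
    simp only [add_mul, Finset.sum_add_distrib]
    ring
  have hXN : ∫ ω, X ω k * (ζy ω - ∑ j, ζ ω j * β0 j) ∂μ = 0 := by
    rw [integral_mul_sub_sum_mul β0 (hL2X k) hL2ζy hL2ζ,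
      (EIVFam.indepFun_latent_noiseY hindep (φ := fun v => v.1 k) (by fun_prop)
        ).integral_mul_eq_zero_of_right (hL2X k).1 hL2ζy.1 hζycent,
      Finset.sum_eq_zero fun j _ => by
        rw [(EIVFam.indepFun_latent_noise_coord hindep (φ := fun v => v.1 k) (by fun_prop) j
          ).integral_mul_eq_zero_of_right (hL2X k).1 (hL2ζ j).1 (hζcent j), zero_mul],
      sub_zero]
  have hζR : ∫ ω, ζ ω k * (Y ω - ∑ j, X ω j * β0 j) ∂μ = 0 :=
    (EIVFam.indepFun_latent_noise_coord hindep (φ := fun v => v.2 - ∑ j, v.1 j * β0 j)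
      (by fun_prop) k).symm.integral_mul_eq_zero_of_left (hL2ζ k).1 hR.1 (hζcent k)
  have hζN : ∫ ω, ζ ω k * (ζy ω - ∑ j, ζ ω j * β0 j) ∂μ = -(β0 k * ∫ ω, (ζ ω k) ^ 2 ∂μ) := by
    rw [integral_mul_sub_sum_mul β0 (hL2ζ k) hL2ζy hL2ζ,
      (EIVFam.indepFun_noise_coord_noiseY hindep k).integral_mul_eq_zero_of_left
        (hL2ζ k).1 hL2ζy.1 (hζcent k),
      Finset.sum_eq_single k (fun j _ hjk => by
        rw [(EIVFam.indepFun_noise_coord hindep (Ne.symm hjk)).integral_mul_eq_zero_of_left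
          (hL2ζ k).1 (hL2ζ j).1 (hζcent k), zero_mul]) (by simp)]
    simp only [sq]
    ring
  simp_rw [hsplit]
  rw [integral_add_mul_add (hL2X k) (hL2ζ k) hR hN, hXN, hζR, hζN]
  ring

end ErrorsInVariables

theorem errors_in_variables_inner_product_invariance_general {Ω : Type*} [MeasurableSpace Ω]
    (μ : Measure Ω) {E : Type*} {p : ℕ}
    (X : E → Ω → Fin p → ℝ) (Y : E → Ω → ℝ)
    (ζ : E → Ω → Fin p → ℝ) (ζy : E → Ω → ℝ) (β0 : Fin p → ℝ)
    (hinv : ∀ (e f : E) (k : Fin p),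
      ∫ ω, X e ω k * (Y e ω - ∑ j, X e ω j * β0 j) ∂μ
        = ∫ ω, X f ω k * (Y f ω - ∑ j, X f ω j * β0 j) ∂μ)
    (hζcent : ∀ e k, ∫ ω, ζ e ω k ∂μ = 0)
    (hζycent : ∀ e, ∫ ω, ζy e ω ∂μ = 0)
    (hsecond : ∀ (e f : E) (k : Fin p),
      ∫ ω, (ζ e ω k) ^ 2 ∂μ = ∫ ω, (ζ f ω k) ^ 2 ∂μ)
    (hindep : ∀ e, iIndepFun
      (EIVFam (X e) (Y e) (ζ e) (ζy e)) μ)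
    (hL2X : ∀ e k, MemLp (fun ω => X e ω k) 2 μ) (hL2Y : ∀ e, MemLp (Y e) 2 μ)
    (hL2ζ : ∀ e k, MemLp (fun ω => ζ e ω k) 2 μ) (hL2ζy : ∀ e, MemLp (ζy e) 2 μ) :
    ∀ (e f : E) (k : Fin p),
      ∫ ω, (X e ω k + ζ e ω k) *
          ((Y e ω + ζy e ω) - ∑ j, (X e ω j + ζ e ω j) * β0 j) ∂μ
        = ∫ ω, (X f ω k + ζ f ω k) *
            ((Y f ω + ζy f ω) - ∑ j, (X f ω j + ζ f ω j) * β0 j) ∂μ := by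
  intro e f k
  rw [integral_observed_moment_eq β0 (hζcent e) (hζycent e) (hindep e) (hL2X e) (hL2Y e)
      (hL2ζ e) (hL2ζy e),
    integral_observed_moment_eq β0 (hζcent f) (hζycent f) (hindep f) (hL2X f) (hL2Y f)
      (hL2ζ f) (hL2ζy f),
    hinv e f k, hsecond e f k]

/-- Errors-in-variables: if inner-product invariance holds for the latent variables
`(X^e, Y^e)` under `β⁰`, and the measurement errors `ζ^e_1, …, ζ^e_p, ζ^e_y` are
centered, jointly independent and independent of `(X^e, Y^e)`, with second moments of
`ζ^e_k` constant across environments, then inner-product invariance also holds for the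
observed variables `X̃^e = X^e + ζ^e`, `Ỹ^e = Y^e + ζ^e_y` under the same `β⁰`. -/
theorem errors_in_variables_inner_product_invariance {Ω : Type*} [MeasurableSpace Ω]
    (μ : Measure Ω) [IsProbabilityMeasure μ] {E : Type*} {p : ℕ}
    (X : E → Ω → Fin p → ℝ) (Y : E → Ω → ℝ)
    (ζ : E → Ω → Fin p → ℝ) (ζy : E → Ω → ℝ) (β0 : Fin p → ℝ)
    (hinv : ∀ (e f : E) (k : Fin p),
      ∫ ω, X e ω k * (Y e ω - ∑ j, X e ω j * β0 j) ∂μ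
        = ∫ ω, X f ω k * (Y f ω - ∑ j, X f ω j * β0 j) ∂μ)
    (hζcent : ∀ e k, ∫ ω, ζ e ω k ∂μ = 0)
    (hζycent : ∀ e, ∫ ω, ζy e ω ∂μ = 0)
    (hsecond : ∀ (e f : E) (k : Fin p),
      ∫ ω, (ζ e ω k) ^ 2 ∂μ = ∫ ω, (ζ f ω k) ^ 2 ∂μ)
    (hindep : ∀ e, iIndepFun
      (EIVFam (X e) (Y e) (ζ e) (ζy e)) μ)
    (hL2X : ∀ e k, MemLp (fun ω => X e ω k) 2 μ) (hL2Y : ∀ e, MemLp (Y e) 2 μ)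
    (hL2ζ : ∀ e k, MemLp (fun ω => ζ e ω k) 2 μ) (hL2ζy : ∀ e, MemLp (ζy e) 2 μ) :
    ∀ (e f : E) (k : Fin p),
      ∫ ω, (X e ω k + ζ e ω k) *
          ((Y e ω + ζy e ω) - ∑ j, (X e ω j + ζ e ω j) * β0 j) ∂μ
        = ∫ ω, (X f ω k + ζ f ω k) *
            ((Y f ω + ζy f ω) - ∑ j, (X f ω j + ζ f ω j) * β0 j) ∂μ :=
  errors_in_variables_inner_product_invariance_general μ X Y ζ ζy β0 hinv hζcent hζycent hsecond
    hindep hL2X hL2Y hL2ζ hL2ζy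
end

section
/- Let Ĝ ∈ R^{p×p} be symmetric, Ẑ ∈ R^p, β^0 ∈ R^p with support S, and let β̂^λ be any solution of min ‖β‖_1 subject to ‖Ẑ − Ĝβ‖_∞ ≤ λ. Define z* = ‖Ẑ − Ĝβ^0‖_∞ and the causal cone invertibility factor CCIF_q(S, Ĝ) = inf { |S|^{1/q} ‖Ĝu‖_∞ / ‖u‖_q : ‖u_{S^c}‖_1 ≤ ‖u_S‖_1, u ≠ 0 }. Then on the event z* ≤ λ, for every q ≥ 1 one has ‖β̂^λ − β^0‖_q ≤ |S|^{1/q}(λ + z*)/CCIF_q(S, Ĝ) ≤ 2|S|^{1/q} λ / CCIF_q(S, Ĝ). -/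
open Finset

/-- The ℓ_q norm of a vector, for real `q ≥ 1`. -/
noncomputable def lqNorm {p : ℕ} (q : ℝ) (u : Fin p → ℝ) : ℝ :=
  (∑ i, |u i| ^ q) ^ (1 / q)

/-- The ℓ_∞ norm of a vector. -/
noncomputable def linftyNorm {p : ℕ} (u : Fin p → ℝ) : ℝ := ⨆ i, |u i|

/-- The causal cone invertibility factor
`CCIF_q(S, G) = inf { |S|^{1/q} ‖Gu‖_∞ / ‖u‖_q : ‖u_{Sᶜ}‖₁ ≤ ‖u_S‖₁, u ≠ 0 }`. -/
noncomputable def CCIF {p : ℕ} (q : ℝ) (S : Finset (Fin p))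
    (G : Matrix (Fin p) (Fin p) ℝ) : ℝ :=
  sInf { r : ℝ | ∃ u : Fin p → ℝ, u ≠ 0 ∧ (∑ i ∈ Sᶜ, |u i| ≤ ∑ i ∈ S, |u i|) ∧
      r = (S.card : ℝ) ^ (1 / q) * linftyNorm (G.mulVec u) / lqNorm q u }

/-! Since `z* ≤ λ`, the true `β⁰` is feasible, so optimality of `β̂` gives `‖β̂‖₁ ≤ ‖β⁰‖₁`;
as `β⁰` vanishes off `S`, this puts `u = β̂ - β⁰` in the cone `‖u_{Sᶜ}‖₁ ≤ ‖u_S‖₁`. The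
definition of CCIF then gives `CCIF · ‖u‖_q ≤ |S|^{1/q} ‖Ĝu‖_∞`, and `Ĝu` is the difference of
the two residuals `Ẑ - Ĝβ⁰` and `Ẑ - Ĝβ̂`, of sup norm at most `z*` and `λ`. -/

section Norms

variable {p : ℕ}

lemma linftyNorm_nonneg (u : Fin p → ℝ) : 0 ≤ linftyNorm u :=
  Real.iSup_nonneg fun _ => abs_nonneg _

lemma abs_le_linftyNorm (u : Fin p → ℝ) (i : Fin p) : |u i| ≤ linftyNorm u :=
  le_ciSup (Set.finite_range fun j => |u j|).bddAbove i

lemma linftyNorm_sub_le (x y : Fin p → ℝ) :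
    linftyNorm (x - y) ≤ linftyNorm x + linftyNorm y := by
  cases isEmpty_or_nonempty (Fin p)
  · simp [linftyNorm]
  · exact ciSup_le fun i => (abs_sub (x i) (y i)).trans <|
      add_le_add (abs_le_linftyNorm x i) (abs_le_linftyNorm y i)

lemma lqNorm_nonneg (q : ℝ) (u : Fin p → ℝ) : 0 ≤ lqNorm q u :=
  Real.rpow_nonneg (sum_nonneg fun _ _ => Real.rpow_nonneg (abs_nonneg _) q) _

lemma lqNorm_zero {q : ℝ} (hq : q ≠ 0) : lqNorm q (0 : Fin p → ℝ) = 0 := by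
  simp [lqNorm, Real.zero_rpow hq, Real.zero_rpow (inv_ne_zero hq)]

end Norms

lemma sum_compl_abs_sub_le_of_sum_abs_le {ι : Type*} [Fintype ι] [DecidableEq ι]
    {S : Finset ι} {β β₀ : ι → ℝ} (hβ₀ : ∀ i ∉ S, β₀ i = 0)
    (hle : ∑ i, |β i| ≤ ∑ i, |β₀ i|) :
    ∑ i ∈ Sᶜ, |(β - β₀) i| ≤ ∑ i ∈ S, |(β - β₀) i| := by
  have hβ₀S : ∑ i, |β₀ i| = ∑ i ∈ S, |β₀ i| :=
    (sum_subset (subset_univ S) fun i _ hi => by rw [hβ₀ i hi, abs_zero]).symm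
  have hcompl : ∑ i ∈ Sᶜ, |(β - β₀) i| = ∑ i ∈ Sᶜ, |β i| :=
    sum_congr rfl fun i hi => by rw [Pi.sub_apply, hβ₀ i (mem_compl.mp hi), sub_zero]
  have hS : ∑ i ∈ S, |β₀ i| - ∑ i ∈ S, |β i| ≤ ∑ i ∈ S, |(β - β₀) i| := by
    rw [← sum_sub_distrib]
    exact sum_le_sum fun i _ => by
      rw [Pi.sub_apply, abs_sub_comm]
      exact abs_sub_abs_le_abs_sub _ _
  have hsplit := sum_add_sum_compl S fun i => |β i|
  linarith

section CCIF

variable {p : ℕ} {q : ℝ} {S : Finset (Fin p)} {G : Matrix (Fin p) (Fin p) ℝ}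

lemma CCIF_le_of_mem_cone {u : Fin p → ℝ} (hu : u ≠ 0)
    (hcone : ∑ i ∈ Sᶜ, |u i| ≤ ∑ i ∈ S, |u i|) :
    CCIF q S G ≤ (S.card : ℝ) ^ (1 / q) * linftyNorm (G.mulVec u) / lqNorm q u := by
  refine csInf_le ⟨0, ?_⟩ ⟨u, hu, hcone, rfl⟩
  rintro _ ⟨v, -, -, rfl⟩
  exact div_nonneg (mul_nonneg (by positivity) (linftyNorm_nonneg _)) (lqNorm_nonneg _ _)

lemma CCIF_mul_lqNorm_le (hq : q ≠ 0) {u : Fin p → ℝ}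
    (hcone : ∑ i ∈ Sᶜ, |u i| ≤ ∑ i ∈ S, |u i|) :
    CCIF q S G * lqNorm q u ≤ (S.card : ℝ) ^ (1 / q) * linftyNorm (G.mulVec u) := by
  have hrhs : 0 ≤ (S.card : ℝ) ^ (1 / q) * linftyNorm (G.mulVec u) :=
    mul_nonneg (by positivity) (linftyNorm_nonneg _)
  rcases eq_or_ne u 0 with rfl | hu
  · simpa [lqNorm_zero hq] using hrhs
  rcases (lqNorm_nonneg q u).eq_or_lt with hN | hN
  · simpa [← hN] using hrhs
  · exact (le_div_iff₀ hN).mp (CCIF_le_of_mem_cone hu hcone)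

end CCIF

lemma linftyNorm_mulVec_sub_le {p : ℕ} (G : Matrix (Fin p) (Fin p) ℝ) (Z β β₀ : Fin p → ℝ) :
    linftyNorm (G.mulVec (β - β₀)) ≤
      linftyNorm (Z - G.mulVec β₀) + linftyNorm (Z - G.mulVec β) := by
  have h : G.mulVec (β - β₀) = (Z - G.mulVec β₀) - (Z - G.mulVec β) := by
    rw [Matrix.mulVec_sub]; abel
  rw [h]
  exact linftyNorm_sub_le _ _

theorem causal_dantzig_finite_sample_bound_general {p : ℕ}
    (Ghat : Matrix (Fin p) (Fin p) ℝ)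
    (Zhat : Fin p → ℝ) (β0 βhat : Fin p → ℝ) (lam : ℝ)
    (S : Finset (Fin p)) (hS : ∀ k, k ∈ S ↔ β0 k ≠ 0)
    (zstar : ℝ) (hzstar : zstar = linftyNorm (Zhat - Ghat.mulVec β0))
    (hfeas : linftyNorm (Zhat - Ghat.mulVec βhat) ≤ lam)
    (hopt : ∀ β : Fin p → ℝ, linftyNorm (Zhat - Ghat.mulVec β) ≤ lam →
      ∑ i, |βhat i| ≤ ∑ i, |β i|)
    (hevent : zstar ≤ lam)
    (q : ℝ) (hq : 1 ≤ q) (hccif : 0 < CCIF q S Ghat) :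
    lqNorm q (βhat - β0) ≤ (S.card : ℝ) ^ (1 / q) * (lam + zstar) / CCIF q S Ghat ∧
      (S.card : ℝ) ^ (1 / q) * (lam + zstar) / CCIF q S Ghat ≤
        2 * (S.card : ℝ) ^ (1 / q) * lam / CCIF q S Ghat := by
  have hc : 0 ≤ (S.card : ℝ) ^ (1 / q) := by positivity
  have hcone : ∑ i ∈ Sᶜ, |(βhat - β0) i| ≤ ∑ i ∈ S, |(βhat - β0) i| :=
    sum_compl_abs_sub_le_of_sum_abs_le (fun i hi => by simpa [hS] using hi)
      (hopt β0 (hzstar ▸ hevent))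
  have hGu : linftyNorm (Ghat.mulVec (βhat - β0)) ≤ lam + zstar := by
    linarith [linftyNorm_mulVec_sub_le Ghat Zhat βhat β0]
  constructor
  · rw [le_div_iff₀' hccif]
    calc CCIF q S Ghat * lqNorm q (βhat - β0)
        ≤ (S.card : ℝ) ^ (1 / q) * linftyNorm (Ghat.mulVec (βhat - β0)) :=
          CCIF_mul_lqNorm_le (by linarith) hcone
      _ ≤ (S.card : ℝ) ^ (1 / q) * (lam + zstar) := mul_le_mul_of_nonneg_left hGu hc
  · rw [mul_assoc 2, mul_left_comm]
    gcongr
    linarith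

/-- Finite sample bound for the regularized causal Dantzig: on the event `z* ≤ λ`,
`‖βhat - β0‖_q ≤ |S|^{1/q}(λ + z*)/CCIF_q(S, Ĝ) ≤ 2|S|^{1/q} λ / CCIF_q(S, Ĝ)`. -/
theorem causal_dantzig_finite_sample_bound {p : ℕ}
    (Ghat : Matrix (Fin p) (Fin p) ℝ) (hGsymm : Ghat.IsSymm)
    (Zhat : Fin p → ℝ) (β0 βhat : Fin p → ℝ) (lam : ℝ)
    (S : Finset (Fin p)) (hS : ∀ k, k ∈ S ↔ β0 k ≠ 0)
    (zstar : ℝ) (hzstar : zstar = linftyNorm (Zhat - Ghat.mulVec β0))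
    (hfeas : linftyNorm (Zhat - Ghat.mulVec βhat) ≤ lam)
    (hopt : ∀ β : Fin p → ℝ, linftyNorm (Zhat - Ghat.mulVec β) ≤ lam →
      ∑ i, |βhat i| ≤ ∑ i, |β i|)
    (hevent : zstar ≤ lam)
    (q : ℝ) (hq : 1 ≤ q) (hccif : 0 < CCIF q S Ghat) :
    lqNorm q (βhat - β0) ≤ (S.card : ℝ) ^ (1 / q) * (lam + zstar) / CCIF q S Ghat ∧
      (S.card : ℝ) ^ (1 / q) * (lam + zstar) / CCIF q S Ghat ≤
        2 * (S.card : ℝ) ^ (1 / q) * lam / CCIF q S Ghat :=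
  causal_dantzig_finite_sample_bound_general Ghat Zhat β0 βhat lam S hS zstar hzstar hfeas hopt
    hevent q hq hccif
end

section
/- Let Ĝ and G be symmetric p×p real matrices, S ⊂ {1,…,p}, and q ≥ 1. Define CCIF_q(S, M) = inf{ |S|^{1/q} ‖Mu‖_∞ / ‖u‖_q : ‖u_{S^c}‖_1 ≤ ‖u_S‖_1, u ≠ 0 }. Then |CCIF_q(S, Ĝ) − CCIF_q(S, G)| ≤ 2|S| ‖Ĝ − G‖_max, where ‖A‖_max = max_{i,j} |A_{i,j}| is the entrywise maximum norm. -/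
open Finset

lemma le_linfty {p : ℕ} (v : Fin p → ℝ) (i : Fin p) : |v i| ≤ linftyNorm v :=
  le_ciSup (Set.Finite.bddAbove (Set.finite_range fun i => |v i|)) i

lemma linfty_nonneg {p : ℕ} (hp : 0 < p) (v : Fin p → ℝ) : 0 ≤ linftyNorm v :=
  (abs_nonneg _).trans (le_linfty v ⟨0, hp⟩)

lemma key_bound {p : ℕ} (A B : Matrix (Fin p) (Fin p) ℝ) (S : Finset (Fin p))
    (hS : S.Nonempty) {q : ℝ} (hq : 1 ≤ q) (u : Fin p → ℝ) (hu : u ≠ 0)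
    (hcone : ∑ i ∈ Sᶜ, |u i| ≤ ∑ i ∈ S, |u i|) :
    (S.card : ℝ) ^ (1 / q) * linftyNorm (A.mulVec u) / lqNorm q u ≤
      (S.card : ℝ) ^ (1 / q) * linftyNorm (B.mulVec u) / lqNorm q u +
        2 * (S.card : ℝ) * (⨆ i, ⨆ j, |A i j - B i j|) := by
  have hp : 0 < p := by
    rcases hS with ⟨s0, _⟩
    exact Fin.pos s0
  haveI : Nonempty (Fin p) := ⟨⟨0, hp⟩⟩
  set M : ℝ := ⨆ i, ⨆ j, |A i j - B i j| with hM
  have hMle : ∀ i j, |A i j - B i j| ≤ M := by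
    intro i j
    have h1 : |A i j - B i j| ≤ ⨆ j, |A i j - B i j| :=
      le_ciSup (Set.Finite.bddAbove (Set.finite_range fun j => |A i j - B i j|)) j
    have h2 : (⨆ j, |A i j - B i j|) ≤ M :=
      le_ciSup (Set.Finite.bddAbove (Set.finite_range fun i => ⨆ j, |A i j - B i j|)) i
    exact h1.trans h2
  have hM0 : 0 ≤ M :=
    le_trans (abs_nonneg _) (hMle (Classical.arbitrary _) (Classical.arbitrary _))
  have hq0 : 0 < q := lt_of_lt_of_le one_pos hq
  have hN0 : 0 < lqNorm q u := by
    obtain ⟨i, hi⟩ : ∃ i, u i ≠ 0 := Function.ne_iff.mp hu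
    have h1 : 0 < ∑ i, |u i| ^ q := by
      refine lt_of_lt_of_le (Real.rpow_pos_of_pos (abs_pos.mpr hi) q) ?_
      exact Finset.single_le_sum (fun j _ => Real.rpow_nonneg (abs_nonneg _) q) (mem_univ i)
    exact Real.rpow_pos_of_pos h1 _
  set N := lqNorm q u with hNdef
  set c : ℝ := (S.card : ℝ) with hc
  have hcard : (0:ℝ) < c := by rw [hc]; exact_mod_cast hS.card_pos
  -- Hölder: ∑_{i∈S} |u i| ≤ c^{1-1/q} * N
  have holder : ∑ i ∈ S, |u i| ≤ c ^ (1 - 1/q) * N := by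
    have h := Real.inner_le_weight_mul_Lp_of_nonneg S hq (fun _ => (1:ℝ)) (fun i => |u i|)
      (fun _ => zero_le_one) (fun i => abs_nonneg _)
    simp only [one_mul, Finset.sum_const, nsmul_eq_mul, mul_one] at h
    rw [one_div]
    refine le_trans h (mul_le_mul_of_nonneg_left ?_ (Real.rpow_nonneg hcard.le _))
    rw [hNdef, lqNorm, one_div]
    refine Real.rpow_le_rpow (Finset.sum_nonneg fun i _ => Real.rpow_nonneg (abs_nonneg _) _) ?_
      (by positivity)
    exact Finset.sum_le_sum_of_subset_of_nonneg (Finset.subset_univ S)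
      (fun i _ _ => Real.rpow_nonneg (abs_nonneg _) _)
  -- l1 bound
  have hl1 : ∑ i, |u i| ≤ 2 * (c ^ (1 - 1/q) * N) := by
    have hsplit : ∑ i, |u i| = ∑ i ∈ S, |u i| + ∑ i ∈ Sᶜ, |u i| := by
      rw [Finset.sum_add_sum_compl]
    rw [hsplit, two_mul]
    exact add_le_add holder (le_trans hcone holder)
  -- linfty perturbation
  have hlinf : linftyNorm (A.mulVec u) ≤ linftyNorm (B.mulVec u) + M * ∑ i, |u i| := by
    rw [linftyNorm]
    refine ciSup_le fun i => ?_
    have h1 : |A.mulVec u i| ≤ |B.mulVec u i| + |(A.mulVec u i) - (B.mulVec u i)| := by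
      have := abs_sub_abs_le_abs_sub (A.mulVec u i) (B.mulVec u i)
      linarith
    have h2 : |(A.mulVec u i) - (B.mulVec u i)| ≤ M * ∑ j, |u j| := by
      have heq : A.mulVec u i - B.mulVec u i = ∑ j, (A i j - B i j) * u j := by
        simp [Matrix.mulVec, dotProduct, Finset.sum_sub_distrib, sub_mul]
      rw [heq]
      refine le_trans (Finset.abs_sum_le_sum_abs _ _) ?_
      rw [Finset.mul_sum]
      refine Finset.sum_le_sum fun j _ => ?_
      rw [abs_mul]
      exact mul_le_mul_of_nonneg_right (hMle i j) (abs_nonneg _)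
    have h3 : |B.mulVec u i| ≤ linftyNorm (B.mulVec u) := le_linfty _ i
    linarith
  have hpow : c ^ (1/q) * c ^ (1 - 1/q) = c := by
    rw [← Real.rpow_add hcard]
    simp
  have step : c ^ (1/q) * linftyNorm (A.mulVec u) ≤
      c ^ (1/q) * linftyNorm (B.mulVec u) + 2 * c * M * N := by
    have e1 : linftyNorm (A.mulVec u) ≤
        linftyNorm (B.mulVec u) + M * (2 * (c ^ (1 - 1/q) * N)) := by
      refine hlinf.trans ?_
      have := mul_le_mul_of_nonneg_left hl1 hM0
      linarith
    calc c ^ (1/q) * linftyNorm (A.mulVec u)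
        ≤ c ^ (1/q) * (linftyNorm (B.mulVec u) + M * (2 * (c ^ (1 - 1/q) * N))) :=
          mul_le_mul_of_nonneg_left e1 (Real.rpow_nonneg hcard.le _)
      _ = c ^ (1/q) * linftyNorm (B.mulVec u) + 2 * (c ^ (1/q) * c ^ (1 - 1/q)) * M * N := by
          ring
      _ = c ^ (1/q) * linftyNorm (B.mulVec u) + 2 * c * M * N := by rw [hpow]
  rw [div_add' _ _ _ hN0.ne', div_le_div_iff₀ hN0 hN0]
  nlinarith [mul_le_mul_of_nonneg_right step hN0.le]

/-- Perturbation bound for the causal cone invertibility factor: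
`|CCIF_q(S, Ĝ) − CCIF_q(S, G)| ≤ 2|S| ‖Ĝ − G‖_max`. -/
theorem CCIF_perturbation_bound {p : ℕ} (Ghat G : Matrix (Fin p) (Fin p) ℝ)
    (hGhat : Ghat.IsSymm) (hG : G.IsSymm) (S : Finset (Fin p)) (q : ℝ) (hq : 1 ≤ q) :
    |CCIF q S Ghat - CCIF q S G| ≤
      2 * (S.card : ℝ) * (⨆ i, ⨆ j, |Ghat i j - G i j|) := by
  rcases S.eq_empty_or_nonempty with rfl | hS
  · -- S empty: both defining sets are empty
    have hempty : ∀ H : Matrix (Fin p) (Fin p) ℝ, CCIF q ∅ H = 0 := by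
      intro H
      have hset : { r : ℝ | ∃ u : Fin p → ℝ, u ≠ 0 ∧
          (∑ i ∈ (∅ : Finset (Fin p))ᶜ, |u i| ≤ ∑ i ∈ (∅ : Finset (Fin p)), |u i|) ∧
          r = ((∅ : Finset (Fin p)).card : ℝ) ^ (1 / q) * linftyNorm (H.mulVec u) / lqNorm q u }
          = ∅ := by
        ext r
        simp only [Set.mem_setOf_eq, Set.mem_empty_iff_false, iff_false]
        rintro ⟨u, hu, hcone, -⟩
        apply hu
        funext i
        simp only [Finset.sum_empty] at hcone
        have h2 : ∑ i ∈ (∅ : Finset (Fin p))ᶜ, |u i| = 0 :=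
          le_antisymm hcone (Finset.sum_nonneg fun _ _ => abs_nonneg _)
        have h3 := (Finset.sum_eq_zero_iff_of_nonneg
          (fun j _ => abs_nonneg (u j))).mp h2 i (by simp)
        simpa using h3
      rw [CCIF, hset, Real.sInf_empty]
    rw [hempty, hempty]
    simp
  · -- S nonempty
    set M : ℝ := ⨆ i, ⨆ j, |Ghat i j - G i j| with hM
    have hMsymm : (⨆ i, ⨆ j, |G i j - Ghat i j|) = M := by
      simp [hM, abs_sub_comm]
    set SetOf : Matrix (Fin p) (Fin p) ℝ → Set ℝ := fun H =>
      { r : ℝ | ∃ u : Fin p → ℝ, u ≠ 0 ∧ (∑ i ∈ Sᶜ, |u i| ≤ ∑ i ∈ S, |u i|) ∧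
        r = (S.card : ℝ) ^ (1 / q) * linftyNorm (H.mulVec u) / lqNorm q u } with hSetOf
    have hCCIF : ∀ H, CCIF q S H = sInf (SetOf H) := fun H => rfl
    obtain ⟨s0, hs0⟩ := hS
    have hp : 0 < p := Fin.pos s0
    haveI : Nonempty (Fin p) := ⟨⟨0, hp⟩⟩
    have hwitness : ∀ H, (SetOf H).Nonempty := by
      intro H
      refine ⟨_, Pi.single s0 (1:ℝ), ?_, ?_, rfl⟩
      · intro h
        have := congrFun h s0
        simp [Pi.single_eq_same] at this
      · have h1 : ∑ i ∈ Sᶜ, |Pi.single s0 (1:ℝ) i| = 0 := by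
          refine Finset.sum_eq_zero fun i hi => ?_
          have hne : i ≠ s0 := fun h => by
            subst h; exact (Finset.mem_compl.mp hi) hs0
          simp [Pi.single_eq_of_ne hne]
        rw [h1]
        exact Finset.sum_nonneg fun _ _ => abs_nonneg _
    have hbdd : ∀ H, BddBelow (SetOf H) := by
      intro H
      refine ⟨0, fun r hr => ?_⟩
      obtain ⟨u, -, -, rfl⟩ := hr
      apply div_nonneg
      · exact mul_nonneg (Real.rpow_nonneg (Nat.cast_nonneg _) _) (linfty_nonneg hp _)
      · exact Real.rpow_nonneg (Finset.sum_nonneg fun i _ =>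
          Real.rpow_nonneg (abs_nonneg _) _) _
    have core : ∀ A B : Matrix (Fin p) (Fin p) ℝ,
        sInf (SetOf A) ≤ sInf (SetOf B) + 2 * (S.card : ℝ) * (⨆ i, ⨆ j, |A i j - B i j|) := by
      intro A B
      have h1 : ∀ b ∈ SetOf B,
          sInf (SetOf A) - 2 * (S.card : ℝ) * (⨆ i, ⨆ j, |A i j - B i j|) ≤ b := by
        rintro b ⟨u, hu, hcone, rfl⟩
        have ha : (S.card : ℝ) ^ (1 / q) * linftyNorm (A.mulVec u) / lqNorm q u ∈ SetOf A :=
          ⟨u, hu, hcone, rfl⟩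
        have h2 := csInf_le (hbdd A) ha
        have h3 := key_bound A B S ⟨s0, hs0⟩ hq u hu hcone
        linarith
      have := le_csInf (hwitness B) h1
      linarith
    have hA := core Ghat G
    have hB := core G Ghat
    rw [hMsymm] at hB
    rw [abs_sub_le_iff]
    exact ⟨by rw [hCCIF, hCCIF]; linarith, by rw [hCCIF, hCCIF]; linarith⟩
end

section
/- In the additive intervention SEM, if there exists k ∈ {1,…,p} with δ^e_k ≡ 0 for all e ∈ E, and the population Gram-shift matrices E[G^e] have a common nonzero null vector Δ, then for any sufficiently small γ ≠ 0 the modified coefficient vector β̃^0 = β^0 + γΔ also satisfies population inner-product invariance: E[Z^e] − E[G^e] β̃^0 = E[Z^{e'}] − E[G^{e'}] β̃^0 for all e, e' ∈ E. Hence the causal coefficient β^0 is not identified from the moments (E[Z^e], E[G^e])_{e ∈ E} alone. -/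
/-- Non-identifiability: if population inner-product invariance holds under `β0`
(`Z^e = G^e β0` for all environments `e`) and the population Gram-shift matrices `G^e`
have a common nonzero null vector `Δ`, then every `β0 + γ • Δ` also satisfies population
inner-product invariance, and hence `β0` is not identified from the moments alone. -/
theorem causal_dantzig_non_identifiability {p : ℕ} {E : Type*} [Nonempty E]
    (Z : E → Fin p → ℝ) (G : E → Matrix (Fin p) (Fin p) ℝ) (β0 Δ : Fin p → ℝ)
    (hinv : ∀ e, Z e - (G e).mulVec β0 = 0)
    (hΔ : Δ ≠ 0) (hker : ∀ e, (G e).mulVec Δ = 0) :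
    (∀ (γ : ℝ) (e e' : E),
        Z e - (G e).mulVec (β0 + γ • Δ) = Z e' - (G e').mulVec (β0 + γ • Δ)) ∧
      ∃ β' : Fin p → ℝ, β' ≠ β0 ∧
        ∀ e e' : E, Z e - (G e).mulVec β' = Z e' - (G e').mulVec β' := by
  have key : ∀ (γ : ℝ) (e : E), Z e - (G e).mulVec (β0 + γ • Δ) = 0 := by
    intro γ e
    rw [Matrix.mulVec_add, Matrix.mulVec_smul, hker, smul_zero, add_zero]
    exact hinv e
  refine ⟨fun γ e e' => by rw [key, key], β0 + Δ, ?_, fun e e' => ?_⟩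
  · intro h
    apply hΔ
    have := congrArg (· - β0) h
    simpa using this
  · have := key 1
    simp only [one_smul] at this
    rw [this, this]
end

section
/- Consider the additive intervention SEM with environments E containing an observational environment, and let β be any population causal Dantzig solution (i.e., max_e ‖E[Z^e] − E[G^e]β‖_∞ = 0). Then the residual Y^e − X^e β has the same distribution across all environments e ∈ E; moreover, for any new environment ẽ ∉ E satisfying the additive intervention assumption with support of δ^{ẽ} contained in ∪_{e∈E} S^e, the distribution of Y^{ẽ} − X^{ẽ} β equals that of Y^e − X^e β for all e ∈ E. -/
open MeasureTheory Finset

/-- Predictive guarantees of population causal Dantzig solutions: in the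
additive-intervention linear SEM with an observational environment and full-rank
interventions, any population causal Dantzig solution `β` yields residuals
`Y^e − X^e β` with the same distribution across all environments `e ∈ E`; moreover,
for a new environment generated by an intervention `δnew` whose support is contained in
`∪_{e ∈ E} S^e`, the residual distribution is unchanged as well. -/
theorem causal_dantzig_residual_invariance {Ω : Type*} [MeasurableSpace Ω]
    (μ : Measure Ω) [IsProbabilityMeasure μ] {p : ℕ}
    {E : Type*} [Fintype E] [DecidableEq E] (hE : 1 < Fintype.card E)
    (A : Matrix (Fin (p + 1)) (Fin (p + 1)) ℝ) (hA : IsUnit (1 - A).det)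
    (η0 : Ω → Fin (p + 1) → ℝ) (δ : E → Ω → Fin (p + 1) → ℝ)
    (hintη : ∀ j, Integrable (fun ω => η0 ω j) μ)
    (hintδ : ∀ e j, Integrable (fun ω => δ e ω j) μ)
    (hintηη : ∀ j j', Integrable (fun ω => η0 ω j * η0 ω j') μ)
    (hintηδ : ∀ e j j', Integrable (fun ω => η0 ω j * δ e ω j') μ)
    (hintδδ : ∀ e j j', Integrable (fun ω => δ e ω j * δ e ω j') μ)
    (hη0mean : ∀ j, ∫ ω, η0 ω j ∂μ = 0)
    (hcov : ∀ e j j', ∫ ω, η0 ω j * δ e ω j' ∂μ = 0)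
    (hδlast : ∀ e ω, δ e ω (Fin.last p) = 0)
    (eobs : E) (hobs : ∀ ω, δ eobs ω = 0)
    (hfull : ∀ (e : E) (ξ : Fin p → ℝ), ξ ≠ 0 →
        (∀ k : Fin p, (∀ᵐ ω ∂μ, δ e ω k.castSucc = 0) → ξ k = 0) →
        0 < ∑ k, ∑ k', ξ k * (∫ ω, δ e ω k.castSucc * δ e ω k'.castSucc ∂μ) * ξ k')
    (X : E → Ω → Fin (p + 1) → ℝ)
    (hX : ∀ e ω, X e ω = (1 - A)⁻¹.mulVec (fun j => η0 ω j + δ e ω j))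
    (hBinv : IsUnit (Matrix.of fun i j : Fin p =>
        (1 - A)⁻¹ i.castSucc j.castSucc).det)
    (Ze : E → Fin p → ℝ)
    (hZe : ∀ e k, Ze e k = (∫ ω, X e ω k.castSucc * X e ω (Fin.last p) ∂μ)
        - (1 / (Fintype.card E - 1 : ℝ)) * ∑ f ∈ Finset.univ.erase e,
            ∫ ω, X f ω k.castSucc * X f ω (Fin.last p) ∂μ)
    (Ge : E → Matrix (Fin p) (Fin p) ℝ)
    (hGe : ∀ e k j, Ge e k j = (∫ ω, X e ω k.castSucc * X e ω j.castSucc ∂μ)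
        - (1 / (Fintype.card E - 1 : ℝ)) * ∑ f ∈ Finset.univ.erase e,
            ∫ ω, X f ω k.castSucc * X f ω j.castSucc ∂μ)
    -- β is a population causal Dantzig solution
    (β : Fin p → ℝ) (hβ : ∀ (e : E) (k : Fin p), Ze e k - ∑ j, Ge e k j * β j = 0)
    -- a new environment whose intervention acts only on ∪_{e ∈ E} S^e
    (δnew : Ω → Fin (p + 1) → ℝ) (hδnewlast : ∀ ω, δnew ω (Fin.last p) = 0)
    (hcovnew : ∀ j j', ∫ ω, η0 ω j * δnew ω j' ∂μ = 0)
    (hintnew : ∀ j, Integrable (fun ω => δnew ω j) μ)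
    (hintnewnew : ∀ j j', Integrable (fun ω => δnew ω j * δnew ω j') μ)
    (hintηnew : ∀ j j', Integrable (fun ω => η0 ω j * δnew ω j') μ)
    (hsupport : ∀ k : Fin p, ¬ (∀ᵐ ω ∂μ, δnew ω k.castSucc = 0) →
        ∃ e : E, ¬ (∀ᵐ ω ∂μ, δ e ω k.castSucc = 0))
    (Xnew : Ω → Fin (p + 1) → ℝ)
    (hXnew : ∀ ω, Xnew ω = (1 - A)⁻¹.mulVec (fun j => η0 ω j + δnew ω j)) :
    (∀ e f : E,
      Measure.map (fun ω => X e ω (Fin.last p) - ∑ k : Fin p, X e ω k.castSucc * β k) μ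
        = Measure.map
            (fun ω => X f ω (Fin.last p) - ∑ k : Fin p, X f ω k.castSucc * β k) μ) ∧
    ∀ e : E,
      Measure.map (fun ω => Xnew ω (Fin.last p) - ∑ k : Fin p, Xnew ω k.castSucc * β k) μ
        = Measure.map
            (fun ω => X e ω (Fin.last p) - ∑ k : Fin p, X e ω k.castSucc * β k) μ := by
  classical
  set M := (1 - A)⁻¹ with hMdef
  have hN2 : (2:ℝ) ≤ (Fintype.card E : ℝ) := by exact_mod_cast hE
  have hN1 : (Fintype.card E : ℝ) - 1 ≠ 0 := by linarith
  set c : Fin (p+1) → ℝ :=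
    fun b => M (Fin.last p) b - ∑ j : Fin p, β j * M j.castSucc b with hcdef
  set γ : Fin p → ℝ := fun k => c k.castSucc with hγdef
  -- generic residual identity
  have hresgen : ∀ (d : Ω → Fin (p+1) → ℝ) (W : Ω → Fin (p+1) → ℝ),
      (∀ ω, W ω = M.mulVec (fun j => η0 ω j + d ω j)) → ∀ ω,
      W ω (Fin.last p) - ∑ k : Fin p, W ω k.castSucc * β k
        = ∑ j, c j * (η0 ω j + d ω j) := by
    intro d W hW ω
    have hval : ∀ i, W ω i = ∑ j, M i j * (η0 ω j + d ω j) := by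
      intro i; rw [hW]; simp [Matrix.mulVec, dotProduct]
    simp only [hval]
    have h1 : ∀ j, c j * (η0 ω j + d ω j)
        = M (Fin.last p) j * (η0 ω j + d ω j)
          - ∑ k : Fin p, M k.castSucc j * (η0 ω j + d ω j) * β k := by
      intro j
      rw [hcdef]; rw [sub_mul, Finset.sum_mul]
      congr 1
      exact Finset.sum_congr rfl fun k _ => by ring
    rw [Finset.sum_congr rfl (fun j _ => h1 j), Finset.sum_sub_distrib]
    congr 1
    rw [Finset.sum_comm]
    exact Finset.sum_congr rfl fun k _ => Finset.sum_mul _ _ _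
  -- integrability and second moments of the noise vector
  have hvdecomp : ∀ e j j', (fun ω => (η0 ω j + δ e ω j) * (η0 ω j' + δ e ω j'))
      = fun ω => η0 ω j * η0 ω j' + η0 ω j * δ e ω j' + η0 ω j' * δ e ω j
          + δ e ω j * δ e ω j' := by
    intro e j j'; funext ω; ring
  have hvint : ∀ e j j', Integrable (fun ω => (η0 ω j + δ e ω j) * (η0 ω j' + δ e ω j')) μ := by
    intro e j j'
    rw [hvdecomp]
    exact (((hintηη j j').add (hintηδ e j j')).add (hintηδ e j' j)).add (hintδδ e j j')
  have hvcov : ∀ e j j', ∫ ω, (η0 ω j + δ e ω j) * (η0 ω j' + δ e ω j') ∂μ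
      = (∫ ω, η0 ω j * η0 ω j' ∂μ) + ∫ ω, δ e ω j * δ e ω j' ∂μ := by
    intro e j j'
    rw [hvdecomp]
    have i1 : Integrable (fun ω => η0 ω j * η0 ω j' + η0 ω j * δ e ω j') μ :=
      (hintηη j j').add (hintηδ e j j')
    have i2 : Integrable
        (fun ω => η0 ω j * η0 ω j' + η0 ω j * δ e ω j' + η0 ω j' * δ e ω j) μ :=
      i1.add (hintηδ e j' j)
    rw [integral_add i2 (hintδδ e j j'), integral_add i1 (hintηδ e j' j),
      integral_add (hintηη j j') (hintηδ e j j'), hcov, hcov]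
    ring
  -- second moments of X
  set Sg : Fin (p+1) → Fin (p+1) → ℝ := fun a b => ∫ ω, η0 ω a * η0 ω b ∂μ with hSgdef
  set D : E → Fin (p+1) → Fin (p+1) → ℝ := fun e a b => ∫ ω, δ e ω a * δ e ω b ∂μ with hDdef
  have hXXeq : ∀ e i i', (fun ω => X e ω i * X e ω i')
      = fun ω => ∑ a, ∑ b, M i a * M i' b * ((η0 ω a + δ e ω a) * (η0 ω b + δ e ω b)) := by
    intro e i i'; funext ω
    have hval : ∀ i, X e ω i = ∑ j, M i j * (η0 ω j + δ e ω j) := by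
      intro i; rw [hX]; simp [Matrix.mulVec, dotProduct]
    rw [hval, hval, Finset.sum_mul_sum]
    exact Finset.sum_congr rfl fun a _ => Finset.sum_congr rfl fun b _ => by ring
  have hXXint : ∀ e i i', ∫ ω, X e ω i * X e ω i' ∂μ
      = ∑ a, ∑ b, M i a * M i' b * (Sg a b + D e a b) := by
    intro e i i'
    rw [hXXeq]
    rw [integral_finset_sum _ (fun a _ =>
      integrable_finset_sum _ (fun b _ => (hvint e a b).const_mul _))]
    refine Finset.sum_congr rfl fun a _ => ?_
    rw [integral_finset_sum _ (fun b _ => (hvint e a b).const_mul _)]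
    refine Finset.sum_congr rfl fun b _ => ?_
    rw [integral_const_mul, hvcov]
  -- sum swap helper
  have hswap : ∀ (T : Fin (p+1) → Fin (p+1) → Fin p → ℝ),
      ∑ j : Fin p, (∑ a, ∑ b, T a b j) * β j = ∑ a, ∑ b, ∑ j : Fin p, T a b j * β j := by
    intro T
    calc ∑ j : Fin p, (∑ a, ∑ b, T a b j) * β j
        = ∑ j : Fin p, ∑ a, (∑ b, T a b j) * β j := by
          exact Finset.sum_congr rfl fun j _ => Finset.sum_mul _ _ _
      _ = ∑ a, ∑ j : Fin p, (∑ b, T a b j) * β j := Finset.sum_comm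
      _ = ∑ a, ∑ j : Fin p, ∑ b, T a b j * β j := by
          exact Finset.sum_congr rfl fun a _ =>
            Finset.sum_congr rfl fun j _ => Finset.sum_mul _ _ _
      _ = ∑ a, ∑ b, ∑ j : Fin p, T a b j * β j :=
          Finset.sum_congr rfl fun a _ => Finset.sum_comm
  -- L and its value
  set L : E → Fin p → ℝ := fun e k =>
    (∫ ω, X e ω k.castSucc * X e ω (Fin.last p) ∂μ)
      - ∑ j : Fin p, (∫ ω, X e ω k.castSucc * X e ω j.castSucc ∂μ) * β j with hLdef
  set K : Fin p → ℝ := fun k => ∑ a, ∑ b, M k.castSucc a * c b * Sg a b with hKdef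
  set Q : E → Fin p → ℝ := fun e k => ∑ a, ∑ b, M k.castSucc a * c b * D e a b with hQdef
  have hLval : ∀ e k, L e k = K k + Q e k := by
    intro e k
    rw [hLdef]
    simp only [hXXint]
    rw [hswap (fun a b j => M k.castSucc a * M j.castSucc b * (Sg a b + D e a b))]
    rw [hKdef, hQdef, ← Finset.sum_add_distrib]
    rw [← Finset.sum_sub_distrib]
    refine Finset.sum_congr rfl fun a _ => ?_
    rw [← Finset.sum_add_distrib, ← Finset.sum_sub_distrib]
    refine Finset.sum_congr rfl fun b _ => ?_
    have hc' : c b = M (Fin.last p) b - ∑ j : Fin p, β j * M j.castSucc b := rfl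
    have h2 : ∑ j : Fin p, M k.castSucc a * M j.castSucc b * (Sg a b + D e a b) * β j
        = (∑ j : Fin p, β j * M j.castSucc b) * (M k.castSucc a * (Sg a b + D e a b)) := by
      rw [Finset.sum_mul]
      exact Finset.sum_congr rfl fun j _ => by ring
    rw [hc', h2]
    ring
  -- Dantzig relation for L
  have hLrel : ∀ e k, L e k
      - (1 / ((Fintype.card E : ℝ) - 1)) * ∑ f ∈ Finset.univ.erase e, L f k = 0 := by
    intro e k
    have h := hβ e k
    rw [hZe, ] at h
    simp only [hGe] at h
    rw [hLdef]
    simp only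
    have hexp : ∑ j : Fin p, ((∫ ω, X e ω k.castSucc * X e ω j.castSucc ∂μ)
          - (1 / ((Fintype.card E : ℝ) - 1)) * ∑ f ∈ Finset.univ.erase e,
              ∫ ω, X f ω k.castSucc * X f ω j.castSucc ∂μ) * β j
        = (∑ j : Fin p, (∫ ω, X e ω k.castSucc * X e ω j.castSucc ∂μ) * β j)
          - (1 / ((Fintype.card E : ℝ) - 1)) * ∑ f ∈ Finset.univ.erase e,
              ∑ j : Fin p, (∫ ω, X f ω k.castSucc * X f ω j.castSucc ∂μ) * β j := by
      have h4 : ∑ j : Fin p, ((∫ ω, X e ω k.castSucc * X e ω j.castSucc ∂μ)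
            - (1 / ((Fintype.card E : ℝ) - 1)) * ∑ f ∈ Finset.univ.erase e,
                ∫ ω, X f ω k.castSucc * X f ω j.castSucc ∂μ) * β j
          = (∑ j : Fin p, (∫ ω, X e ω k.castSucc * X e ω j.castSucc ∂μ) * β j)
            - ∑ j : Fin p, ((1 / ((Fintype.card E : ℝ) - 1)) * ∑ f ∈ Finset.univ.erase e,
                ∫ ω, X f ω k.castSucc * X f ω j.castSucc ∂μ) * β j := by
        rw [← Finset.sum_sub_distrib]
        exact Finset.sum_congr rfl fun j _ => sub_mul _ _ _
      rw [h4]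
      congr 1
      calc ∑ j : Fin p, ((1 / ((Fintype.card E : ℝ) - 1)) * ∑ f ∈ Finset.univ.erase e,
              ∫ ω, X f ω k.castSucc * X f ω j.castSucc ∂μ) * β j
          = (1 / ((Fintype.card E : ℝ) - 1)) * ∑ j : Fin p,
              (∑ f ∈ Finset.univ.erase e,
                ∫ ω, X f ω k.castSucc * X f ω j.castSucc ∂μ) * β j := by
            rw [Finset.mul_sum]
            exact Finset.sum_congr rfl fun j _ => by ring
        _ = (1 / ((Fintype.card E : ℝ) - 1)) * ∑ j : Fin p,
              ∑ f ∈ Finset.univ.erase e,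
                (∫ ω, X f ω k.castSucc * X f ω j.castSucc ∂μ) * β j := by
            congr 1
            exact Finset.sum_congr rfl fun j _ => Finset.sum_mul _ _ _
        _ = (1 / ((Fintype.card E : ℝ) - 1)) * ∑ f ∈ Finset.univ.erase e,
              ∑ j : Fin p, (∫ ω, X f ω k.castSucc * X f ω j.castSucc ∂μ) * β j := by
            rw [Finset.sum_comm]
    rw [hexp] at h
    rw [Finset.sum_sub_distrib, mul_sub]
    linarith [h]
  -- Dantzig relation for Q
  have hcard : ((Finset.univ.erase eobs).card : ℝ) = (Fintype.card E : ℝ) - 1 ∧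
      ∀ e : E, ((Finset.univ.erase e).card : ℝ) = (Fintype.card E : ℝ) - 1 := by
    constructor
    · rw [Finset.card_erase_of_mem (Finset.mem_univ _), Finset.card_univ]
      have h1 : 1 ≤ Fintype.card E := le_of_lt hE
      push_cast [Nat.cast_sub h1]; ring
    · intro e
      rw [Finset.card_erase_of_mem (Finset.mem_univ _), Finset.card_univ]
      have h1 : 1 ≤ Fintype.card E := le_of_lt hE
      push_cast [Nat.cast_sub h1]; ring
  have hQrel : ∀ e k, Q e k
      - (1 / ((Fintype.card E : ℝ) - 1)) * ∑ f ∈ Finset.univ.erase e, Q f k = 0 := by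
    intro e k
    have h := hLrel e k
    simp only [hLval] at h
    rw [Finset.sum_add_distrib, Finset.sum_const, nsmul_eq_mul, hcard.2 e] at h
    have hkey : (1 / ((Fintype.card E : ℝ) - 1)) * (((Fintype.card E : ℝ) - 1) * K k)
        = K k := by field_simp
    linarith [h, hkey, mul_add (1 / ((Fintype.card E : ℝ) - 1))
      (((Fintype.card E : ℝ) - 1) * K k) (∑ f ∈ Finset.univ.erase e, Q f k)]
  -- observational environment has zero Q
  have hDobs : ∀ a b, D eobs a b = 0 := by
    intro a b
    rw [hDdef]
    simp only
    have : ∀ ω, δ eobs ω a * δ eobs ω b = 0 := by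
      intro ω; rw [hobs]; simp
    simp [this]
  have hQobs : ∀ k, Q eobs k = 0 := by
    intro k; rw [hQdef]; simp [hDobs]
  have hsumQ : ∀ k, ∑ f, Q f k = 0 := by
    intro k
    have h := hQrel eobs k
    rw [hQobs] at h
    have hc : (1 / ((Fintype.card E : ℝ) - 1)) ≠ 0 := by
      simp [hN1]
    have h2 : ∑ f ∈ Finset.univ.erase eobs, Q f k = 0 := by
      rcases mul_eq_zero.1 (by linarith : (1 / ((Fintype.card E : ℝ) - 1))
        * ∑ f ∈ Finset.univ.erase eobs, Q f k = 0) with h3 | h3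
      · exact absurd h3 hc
      · exact h3
    rw [← Finset.sum_erase_add _ _ (Finset.mem_univ eobs), h2, hQobs]
    ring
  have hQ0 : ∀ e k, Q e k = 0 := by
    intro e k
    have h := hQrel e k
    have herase : ∑ f ∈ Finset.univ.erase e, Q f k = - Q e k := by
      rw [Finset.sum_erase_eq_sub (Finset.mem_univ e), hsumQ]; ring
    rw [herase] at h
    have hcpos : 0 < (1 / ((Fintype.card E : ℝ) - 1)) := by
      have h5 : (0:ℝ) < (Fintype.card E : ℝ) - 1 := by linarith
      positivity
    nlinarith [h, hcpos]
  -- restrict Q to Fin p sums and invert B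
  have hDlast1 : ∀ e b, D e (Fin.last p) b = 0 := by
    intro e b; rw [hDdef]; simp only
    have : ∀ ω, δ e ω (Fin.last p) * δ e ω b = 0 := fun ω => by rw [hδlast]; ring
    simp [this]
  have hDlast2 : ∀ e a, D e a (Fin.last p) = 0 := by
    intro e a; rw [hDdef]; simp only
    have : ∀ ω, δ e ω a * δ e ω (Fin.last p) = 0 := fun ω => by rw [hδlast]; ring
    simp [this]
  set B : Matrix (Fin p) (Fin p) ℝ :=
    Matrix.of fun i j : Fin p => M i.castSucc j.castSucc with hBdef
  set w : E → Fin p → ℝ :=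
    fun e k1 => ∑ k2 : Fin p, c k2.castSucc * D e k1.castSucc k2.castSucc with hwdef
  have hQval : ∀ e k, Q e k = ∑ k1 : Fin p, B k k1 * w e k1 := by
    intro e k
    show ∑ a, ∑ b, M k.castSucc a * c b * D e a b = _
    rw [Fin.sum_univ_castSucc (f := fun a => ∑ b, M k.castSucc a * c b * D e a b)]
    have hlast : ∑ b, M k.castSucc (Fin.last p) * c b * D e (Fin.last p) b = 0 := by
      simp [hDlast1]
    rw [hlast, add_zero]
    refine Finset.sum_congr rfl fun k1 _ => ?_
    have hB' : B k k1 = M k.castSucc k1.castSucc := rfl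
    have hw' : w e k1 = ∑ k2 : Fin p, c k2.castSucc * D e k1.castSucc k2.castSucc := rfl
    rw [hB', hw', Finset.mul_sum,
      Fin.sum_univ_castSucc (f := fun b => M k.castSucc k1.castSucc * c b * D e k1.castSucc b),
      hDlast2, mul_zero, add_zero]
    exact Finset.sum_congr rfl fun k2 _ => by ring
  have hw0 : ∀ e, w e = 0 := by
    intro e
    have hmv : B.mulVec (w e) = 0 := by
      funext k
      have := (hQval e k).symm.trans (hQ0 e k)
      simpa [Matrix.mulVec, dotProduct] using this
    have h1 : B⁻¹.mulVec (B.mulVec (w e)) = 0 := by rw [hmv]; simp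
    rwa [Matrix.mulVec_mulVec, Matrix.nonsing_inv_mul B hBinv, Matrix.one_mulVec] at h1
  -- quadratic form vanishes
  have hquad : ∀ e, ∑ k1 : Fin p, ∑ k2 : Fin p,
      γ k1 * D e k1.castSucc k2.castSucc * γ k2 = 0 := by
    intro e
    have : ∀ k1, ∑ k2 : Fin p, γ k1 * D e k1.castSucc k2.castSucc * γ k2
        = γ k1 * w e k1 := by
      intro k1
      rw [hwdef]; simp only; rw [Finset.mul_sum]
      exact Finset.sum_congr rfl fun k2 _ => by rw [hγdef]; ring
    rw [Finset.sum_congr rfl fun k1 _ => this k1]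
    simp [hw0 e]
  -- crucial support fact: γ vanishes on supports
  have hDzero : ∀ e (k k' : Fin p),
      ((∀ᵐ ω ∂μ, δ e ω k.castSucc = 0) ∨ (∀ᵐ ω ∂μ, δ e ω k'.castSucc = 0)) →
      D e k.castSucc k'.castSucc = 0 := by
    intro e k k' h
    rw [hDdef]; simp only
    apply integral_eq_zero_of_ae
    rcases h with h | h
    · filter_upwards [h] with ω hω; simp [hω]
    · filter_upwards [h] with ω hω; simp [hω]
  have hgamma : ∀ e k, ¬ (∀ᵐ ω ∂μ, δ e ω k.castSucc = 0) → γ k = 0 := by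
    intro e
    set ξ : Fin p → ℝ :=
      fun k => if (∀ᵐ ω ∂μ, δ e ω k.castSucc = 0) then 0 else γ k with hξdef
    have hform : ∑ k, ∑ k', ξ k * (∫ ω, δ e ω k.castSucc * δ e ω k'.castSucc ∂μ) * ξ k'
        = ∑ k1 : Fin p, ∑ k2 : Fin p, γ k1 * D e k1.castSucc k2.castSucc * γ k2 := by
      refine Finset.sum_congr rfl fun k _ => Finset.sum_congr rfl fun k' _ => ?_
      have hDD : (∫ ω, δ e ω k.castSucc * δ e ω k'.castSucc ∂μ)
          = D e k.castSucc k'.castSucc := by rw [hDdef]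
      rw [hDD, hξdef]
      by_cases h1 : (∀ᵐ ω ∂μ, δ e ω k.castSucc = 0)
      · rw [hDzero e k k' (Or.inl h1)]; simp
      · by_cases h2 : (∀ᵐ ω ∂μ, δ e ω k'.castSucc = 0)
        · rw [hDzero e k k' (Or.inr h2)]; simp
        · simp [h1, h2]
    have hξ0 : ξ = 0 := by
      by_contra hne
      have hpos := hfull e ξ hne (fun k h => by simp [hξdef, h])
      rw [hform, hquad e] at hpos
      exact lt_irrefl 0 hpos
    intro k hk
    have := congrFun hξ0 k
    simpa [hξdef, hk] using this
  -- a.e. vanishing of the intervention part of residuals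
  have hae : ∀ e, ∀ᵐ ω ∂μ, ∀ k : Fin p, γ k * δ e ω k.castSucc = 0 := by
    intro e
    rw [ae_all_iff]
    intro k
    by_cases hk : (∀ᵐ ω ∂μ, δ e ω k.castSucc = 0)
    · filter_upwards [hk] with ω hω; simp [hω]
    · filter_upwards with ω; rw [hgamma e k hk]; ring
  have haenew : ∀ᵐ ω ∂μ, ∀ k : Fin p, γ k * δnew ω k.castSucc = 0 := by
    rw [ae_all_iff]
    intro k
    by_cases hk : (∀ᵐ ω ∂μ, δnew ω k.castSucc = 0)
    · filter_upwards [hk] with ω hω; simp [hω]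
    · obtain ⟨e, he⟩ := hsupport k hk
      filter_upwards with ω; rw [hgamma e k he]; ring
  -- conclude by matching residual distributions with the base distribution
  have hmape : ∀ e, (fun ω => X e ω (Fin.last p) - ∑ k : Fin p, X e ω k.castSucc * β k)
      =ᵐ[μ] (fun ω => ∑ j, c j * η0 ω j) := by
    intro e
    filter_upwards [hae e] with ω hω
    rw [hresgen (fun ω => δ e ω) (fun ω => X e ω) (fun ω => hX e ω) ω]
    have hδ0 : ∑ j, c j * δ e ω j = 0 := by
      rw [Fin.sum_univ_castSucc, hδlast, mul_zero, add_zero]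
      refine Finset.sum_eq_zero fun k _ => ?_
      have := hω k
      rw [hγdef] at this
      exact this
    calc ∑ j, c j * (η0 ω j + δ e ω j)
        = (∑ j, c j * η0 ω j) + ∑ j, c j * δ e ω j := by
          rw [← Finset.sum_add_distrib]
          exact Finset.sum_congr rfl fun j _ => by ring
      _ = ∑ j, c j * η0 ω j := by rw [hδ0, add_zero]
  have hmapnew : (fun ω => Xnew ω (Fin.last p) - ∑ k : Fin p, Xnew ω k.castSucc * β k)
      =ᵐ[μ] (fun ω => ∑ j, c j * η0 ω j) := by
    filter_upwards [haenew] with ω hω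
    rw [hresgen δnew Xnew hXnew ω]
    have hδ0 : ∑ j, c j * δnew ω j = 0 := by
      rw [Fin.sum_univ_castSucc, hδnewlast, mul_zero, add_zero]
      refine Finset.sum_eq_zero fun k _ => ?_
      have := hω k
      rw [hγdef] at this
      exact this
    calc ∑ j, c j * (η0 ω j + δnew ω j)
        = (∑ j, c j * η0 ω j) + ∑ j, c j * δnew ω j := by
          rw [← Finset.sum_add_distrib]
          exact Finset.sum_congr rfl fun j _ => by ring
      _ = ∑ j, c j * η0 ω j := by rw [hδ0, add_zero]
  constructor
  · intro e f
    rw [Measure.map_congr (hmape e), Measure.map_congr (hmape f)]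
  · intro e
    rw [Measure.map_congr hmapnew, Measure.map_congr (hmape e)]
end

section
/- Suppose (X^e, Y^e) satisfy inner-product invariance under β^0 for e ∈ {1,2}, with invertible G := E[(X^1)^t X^1] − E[(X^2)^t X^2], the population form of Ĝ = (X^1)^t X^1/n_1 − (X^2)^t X^2/n_2, and let Z := E[(X^1)^t Y^1] − E[(X^2)^t Y^2]. Then β^0 = G^{-1} Z. -/
open MeasureTheory

lemma expand_int {Ω : Type*} [MeasurableSpace Ω] (μ : Measure Ω) {p : ℕ}
    (X : Ω → Fin p → ℝ) (Y : Ω → ℝ) (β0 : Fin p → ℝ) (k : Fin p)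
    (hXX : ∀ j, Integrable (fun ω => X ω k * X ω j) μ)
    (hXY : Integrable (fun ω => X ω k * Y ω) μ) :
    ∫ ω, X ω k * (Y ω - ∑ j, X ω j * β0 j) ∂μ
      = (∫ ω, X ω k * Y ω ∂μ) - ∑ j, (∫ ω, X ω k * X ω j ∂μ) * β0 j := by
  have h1 : ∀ ω, X ω k * (Y ω - ∑ j, X ω j * β0 j)
      = X ω k * Y ω - ∑ j, (X ω k * X ω j) * β0 j := by
    intro ω
    rw [mul_sub, Finset.mul_sum]
    congr 1
    apply Finset.sum_congr rfl
    intro j _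
    ring
  simp only [h1]
  rw [integral_sub hXY (integrable_finset_sum _ (fun j _ => (hXX j).mul_const _)),
    integral_finset_sum _ (fun j _ => (hXX j).mul_const _)]
  congr 1
  apply Finset.sum_congr rfl
  intro j _
  rw [integral_mul_const]

/-- Population identification of the causal coefficient behind the unregularized causal
Dantzig: under inner-product invariance with invertible population Gram-shift matrix `G`,
`β0 = G⁻¹ Z`. -/
theorem causal_dantzig_population_identification {Ω : Type*} [MeasurableSpace Ω]
    (μ : Measure Ω) [IsProbabilityMeasure μ] {p : ℕ}
    (X1 X2 : Ω → Fin p → ℝ) (Y1 Y2 : Ω → ℝ) (β0 : Fin p → ℝ)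
    (hintXX : ∀ k j, Integrable (fun ω => X1 ω k * X1 ω j) μ ∧
        Integrable (fun ω => X2 ω k * X2 ω j) μ)
    (hintXY : ∀ k, Integrable (fun ω => X1 ω k * Y1 ω) μ ∧
        Integrable (fun ω => X2 ω k * Y2 ω) μ)
    (hinv : ∀ k, ∫ ω, X1 ω k * (Y1 ω - ∑ j, X1 ω j * β0 j) ∂μ
        = ∫ ω, X2 ω k * (Y2 ω - ∑ j, X2 ω j * β0 j) ∂μ)
    (G : Matrix (Fin p) (Fin p) ℝ)
    (hG : G = Matrix.of fun k j =>
        (∫ ω, X1 ω k * X1 ω j ∂μ) - ∫ ω, X2 ω k * X2 ω j ∂μ)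
    (Z : Fin p → ℝ)
    (hZ : Z = fun k => (∫ ω, X1 ω k * Y1 ω ∂μ) - ∫ ω, X2 ω k * Y2 ω ∂μ)
    (hGinv : IsUnit G.det) :
    β0 = G⁻¹.mulVec Z := by
  have hZG : Z = G.mulVec β0 := by
    funext k
    have e1 := expand_int μ X1 Y1 β0 k (fun j => (hintXX k j).1) (hintXY k).1
    have e2 := expand_int μ X2 Y2 β0 k (fun j => (hintXX k j).2) (hintXY k).2
    have h := hinv k
    rw [e1, e2] at h
    simp only [hZ, hG, Matrix.mulVec, dotProduct, Matrix.of_apply]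
    have hs : ∑ j, ((∫ ω, X1 ω k * X1 ω j ∂μ) - ∫ ω, X2 ω k * X2 ω j ∂μ) * β0 j
        = (∑ j, (∫ ω, X1 ω k * X1 ω j ∂μ) * β0 j)
          - ∑ j, (∫ ω, X2 ω k * X2 ω j ∂μ) * β0 j := by
      rw [← Finset.sum_sub_distrib]
      exact Finset.sum_congr rfl fun j _ => by ring
    rw [hs]
    linarith
  rw [hZG, Matrix.mulVec_mulVec, Matrix.nonsing_inv_mul G hGinv, Matrix.one_mulVec]
end

section
/- Binary-environment Wald vs. causal Dantzig population identities: suppose X = e·η_x + H (with e ∈ {1,2} a deterministic environment label, η_x, H centered, independent, non-degenerate), and Y = βX + H + η_y with η_y centered independent of (η_x, H). Then E[X | e=1] = E[X | e=2] = 0 (so the instrumental-variable/Wald estimand (E[Y|e=1]−E[Y|e=2])/(E[X|e=1]−E[X|e=2]) is not well-defined), while the causal Dantzig population estimand (E[X^1 Y^1] − E[X^2 Y^2]) / (E[(X^1)^2] − E[(X^2)^2]) is well-defined and equals β. -/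
/-!
In each environment `X^e = e η_x + H` is centred, so `E[(X^e)²] = Var X^e = e² Var η_x + Var H`.
Writing `Y^e = β X^e + (H + η_y)` gives `E[X^e Y^e] = β E[(X^e)²] + E[X^e (H + η_y)]`, and the
confounding term equals `E[H (H + η_y)]` for every `e`, because `η_x` is centred and independent
of `H + η_y`. It cancels in the difference of the two environments, whose denominator is
`-3 Var η_x ≠ 0`, so the ratio is `β`.
-/

open MeasureTheory ProbabilityTheory

namespace ProbabilityTheory

variable {Ω : Type*} [MeasurableSpace Ω] {μ : Measure Ω} {U V Z : Ω → ℝ}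

lemma integral_const_mul_add_eq_zero (hU : Integrable U μ) (hV : Integrable V μ)
    (hU0 : μ[U] = 0) (hV0 : μ[V] = 0) (c : ℝ) : ∫ ω, (c * U ω + V ω) ∂μ = 0 := by
  rw [integral_add (hU.const_mul c) hV, integral_const_mul, hU0, hV0]
  ring

lemma IndepFun.integral_const_mul_add_sq [IsFiniteMeasure μ] (hUV : U ⟂ᵢ[μ] V)
    (hU : MemLp U 2 μ) (hV : MemLp V 2 μ) (hU0 : μ[U] = 0) (hV0 : μ[V] = 0) (c : ℝ) :
    ∫ ω, (c * U ω + V ω) ^ 2 ∂μ = c ^ 2 * Var[U; μ] + Var[V; μ] := by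
  have hcUV : (fun ω ↦ c * U ω) ⟂ᵢ[μ] V := hUV.comp (measurable_const_mul c) measurable_id
  rw [← variance_of_integral_eq_zero (X := fun ω ↦ c * U ω + V ω)
      ((hU.1.aemeasurable.const_mul c).add hV.1.aemeasurable) (integral_const_mul_add_eq_zero
      (hU.integrable one_le_two) (hV.integrable one_le_two) hU0 hV0 c),
    hcUV.variance_fun_add (hU.const_mul c) hV, variance_const_mul]

lemma IndepFun.integral_const_mul_add_mul (hUZ : U ⟂ᵢ[μ] Z) (hU : Integrable U μ)
    (hZ : Integrable Z μ) (hU0 : μ[U] = 0) (hVZ : Integrable (fun ω ↦ V ω * Z ω) μ) (c : ℝ) :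
    ∫ ω, (c * U ω + V ω) * Z ω ∂μ = ∫ ω, V ω * Z ω ∂μ := by
  have hUZ_int : Integrable (fun ω ↦ U ω * Z ω) μ := hUZ.integrable_mul hU hZ
  have hUZ0 : ∫ ω, U ω * Z ω ∂μ = 0 := by
    rw [hUZ.integral_fun_mul_eq_mul_integral hU.aestronglyMeasurable hZ.aestronglyMeasurable,
      hU0, zero_mul]
  simp_rw [add_mul, mul_assoc]
  rw [integral_add (hUZ_int.const_mul c) hVZ, integral_const_mul, hUZ0, mul_zero, zero_add]

lemma integral_mul_const_mul_add [IsFiniteMeasure μ] (hU : MemLp U 2 μ) (hZ : MemLp Z 2 μ)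
    (β : ℝ) : ∫ ω, U ω * (β * U ω + Z ω) ∂μ = β * ∫ ω, U ω ^ 2 ∂μ + ∫ ω, U ω * Z ω ∂μ := by
  have hUZ : Integrable (fun ω ↦ U ω * Z ω) μ := hU.integrable_mul hZ
  simp_rw [mul_add, mul_left_comm (U _) β, ← sq]
  rw [integral_add (hU.integrable_sq.const_mul β) hUZ, integral_const_mul]

end ProbabilityTheory

theorem wald_degenerate_causal_dantzig_consistent_general {Ω : Type*} [MeasurableSpace Ω]
    (μ : Measure Ω) [IsProbabilityMeasure μ]
    (ηx H ηy : Ω → ℝ) (β : ℝ)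
    (hL2x : MemLp ηx 2 μ) (hL2H : MemLp H 2 μ) (hL2y : MemLp ηy 2 μ)
    (hcx : ∫ ω, ηx ω ∂μ = 0) (hcH : ∫ ω, H ω ∂μ = 0)
    (hnd : 0 < variance ηx μ)
    (hindep : iIndepFun ![ηx, H, ηy] μ)
    (X : ℝ → Ω → ℝ) (hX : ∀ e, X e = fun ω => e * ηx ω + H ω)
    (Y : ℝ → Ω → ℝ) (hY : ∀ e, Y e = fun ω => β * X e ω + H ω + ηy ω) :
    ((∫ ω, X 1 ω ∂μ) = 0 ∧ (∫ ω, X 2 ω ∂μ) = 0) ∧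
      ((∫ ω, (X 1 ω) ^ 2 ∂μ) - ∫ ω, (X 2 ω) ^ 2 ∂μ) ≠ 0 ∧
      ((∫ ω, X 1 ω * Y 1 ω ∂μ) - ∫ ω, X 2 ω * Y 2 ω ∂μ) /
          ((∫ ω, (X 1 ω) ^ 2 ∂μ) - ∫ ω, (X 2 ω) ^ 2 ∂μ) = β := by
  have hmeas : ∀ i, AEMeasurable (![ηx, H, ηy] i) μ := by
    intro i; fin_cases i
    exacts [hL2x.1.aemeasurable, hL2H.1.aemeasurable, hL2y.1.aemeasurable]
  have hxH : ηx ⟂ᵢ[μ] H := hindep.indepFun (i := 0) (j := 1) (by decide)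
  have hxZ : ηx ⟂ᵢ[μ] (H + ηy) := hindep.indepFun_add_right₀ hmeas 0 1 2 (by decide) (by decide)
  have hL2Z : MemLp (H + ηy) 2 μ := hL2H.add hL2y
  have hmean (e : ℝ) : ∫ ω, X e ω ∂μ = 0 := by
    rw [hX]
    exact integral_const_mul_add_eq_zero (hL2x.integrable one_le_two)
      (hL2H.integrable one_le_two) hcx hcH e
  have hsq (e : ℝ) : ∫ ω, X e ω ^ 2 ∂μ = e ^ 2 * Var[ηx; μ] + Var[H; μ] := by
    rw [hX]
    exact hxH.integral_const_mul_add_sq hL2x hL2H hcx hcH e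
  have hcross (e : ℝ) : ∫ ω, X e ω * Y e ω ∂μ
      = β * ∫ ω, X e ω ^ 2 ∂μ + ∫ ω, H ω * (H + ηy) ω ∂μ := by
    have hXe : MemLp (X e) 2 μ := hX e ▸ (hL2x.const_mul e).add hL2H
    have hYe : Y e = fun ω ↦ β * X e ω + (H + ηy) ω := by
      rw [hY]; funext ω; simp only [Pi.add_apply, add_assoc]
    rw [hYe, integral_mul_const_mul_add hXe hL2Z, hX, hxZ.integral_const_mul_add_mul
      (hL2x.integrable one_le_two) (hL2Z.integrable one_le_two) hcx (hL2H.integrable_mul hL2Z)]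
  have hden : ∫ ω, X 1 ω ^ 2 ∂μ - ∫ ω, X 2 ω ^ 2 ∂μ = -3 * Var[ηx; μ] := by
    rw [hsq, hsq]; ring
  have hden_ne : ∫ ω, X 1 ω ^ 2 ∂μ - ∫ ω, X 2 ω ^ 2 ∂μ ≠ 0 := by
    rw [hden]; exact mul_ne_zero (by norm_num) hnd.ne'
  refine ⟨⟨hmean 1, hmean 2⟩, hden_ne, ?_⟩
  rw [hcross, hcross, div_eq_iff hden_ne]
  ring

/-- Binary environment, variance intervention `X = e·η_x + H`, `Y = βX + H + η_y`:
the environments produce no mean shift in `X` (so the Wald/IV estimand is degenerate),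
while the causal Dantzig population estimand
`(E[X¹Y¹] − E[X²Y²])/(E[(X¹)²] − E[(X²)²])` is well-defined and equals `β`. -/
theorem wald_degenerate_causal_dantzig_consistent {Ω : Type*} [MeasurableSpace Ω]
    (μ : Measure Ω) [IsProbabilityMeasure μ]
    (ηx H ηy : Ω → ℝ) (β : ℝ)
    (hmx : Measurable ηx) (hmH : Measurable H) (hmy : Measurable ηy)
    (hL2x : MemLp ηx 2 μ) (hL2H : MemLp H 2 μ) (hL2y : MemLp ηy 2 μ)
    (hcx : ∫ ω, ηx ω ∂μ = 0) (hcH : ∫ ω, H ω ∂μ = 0) (hcy : ∫ ω, ηy ω ∂μ = 0)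
    (hnd : 0 < variance ηx μ)
    (hindep : iIndepFun ![ηx, H, ηy] μ)
    (X : ℝ → Ω → ℝ) (hX : ∀ e, X e = fun ω => e * ηx ω + H ω)
    (Y : ℝ → Ω → ℝ) (hY : ∀ e, Y e = fun ω => β * X e ω + H ω + ηy ω) :
    ((∫ ω, X 1 ω ∂μ) = 0 ∧ (∫ ω, X 2 ω ∂μ) = 0) ∧
      ((∫ ω, (X 1 ω) ^ 2 ∂μ) - ∫ ω, (X 2 ω) ^ 2 ∂μ) ≠ 0 ∧
      ((∫ ω, X 1 ω * Y 1 ω ∂μ) - ∫ ω, X 2 ω * Y 2 ω ∂μ) /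
          ((∫ ω, (X 1 ω) ^ 2 ∂μ) - ∫ ω, (X 2 ω) ^ 2 ∂μ) = β :=
  wald_degenerate_causal_dantzig_consistent_general μ ηx H ηy β hL2x hL2H hL2y hcx hcH hnd hindep X
    hX Y hY
end
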